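/- Let μ and ν be probability measures on ℝ with all moments finite, let s = s_1…s_n ∈ S⁺ and ε ∈ {1,2}^n. Then there exists a unique coarsest pair (u′, u″), where u′ is a partition of the subword s(1,ε) and u″ is a partition of the subword s(2,ε), such that the partition u′∪u″ of s (whose blocks are those of u′ together with those of u″) is admissible; moreover, writing u′ = (u′_1,…,u′_p) and u″ = (u″_1,…,u″_q), one has (\hat{μ}⊗\hat{ν})(s,ε) = \hat{μ}(X(u′_1))⋯\hat{μ}(X(u′_p)) · \hat{ν}(X(u″_1))⋯\hat{ν}(X(u″_q)), the functionals being evaluated at the subwords of s determined by the blocks. -/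

import Mathlib

open scoped TensorProduct

/-- The two-letter alphabet `{z, w}`. -/
inductive Letter | z | w
deriving DecidableEq

/-- Words: elements of the free monoid `S = FS({z,w})`. -/
abbrev Word := List Letter

/-- The three generators `X, X', P` of the algebra `B`. -/
inductive Gen | X | X' | P
deriving DecidableEq, BEq

/-- The free unital associative `ℂ`-algebra on the generators `X, X', P`. -/
abbrev B := FreeAlgebra ℂ Gen

/-- `X(z) = X`, `X(w) = X'`. -/
noncomputable def Xletter (l : Letter) : B :=
  FreeAlgebra.ι ℂ (match l with | .z => Gen.X | .w => Gen.X')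

/-- `X(t) = X(t₁) ⋯ X(t_r)` for a word `t ∈ S`. -/
noncomputable def Xword (t : Word) : B := (t.map Xletter).prod

/-- The projection generator `P`. -/
noncomputable def Pgen : B := FreeAlgebra.ι ℂ Gen.P

/-- Value of the functional `\hat μ` (built from the moment sequence `m`, `m 0 = 1`)
on a basis word of `B`: split the word into maximal `P`-free blocks and take the
product of `m (length of block)`. -/
def wordVal (m : ℕ → ℂ) (l : List Gen) : ℂ :=
  ((l.splitOn Gen.P).map (fun t => if t = [] then 1 else m t.length)).prod

/-- The linear functional `\hat μ : B → ℂ` associated with a moment sequence `m`. -/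
noncomputable def hatL (m : ℕ → ℂ) : B →ₗ[ℂ] ℂ :=
  (Finsupp.linearCombination ℂ (fun x : FreeMonoid Gen => wordVal m (FreeMonoid.toList x))).comp
    ((MonoidAlgebra.coeffLinearEquiv ℂ).toLinearMap.comp
    (FreeAlgebra.equivMonoidAlgebraFreeMonoid : B ≃ₐ[ℂ] MonoidAlgebra ℂ (FreeMonoid Gen)).toLinearMap)

/-- The coproduct `Δ : B → B ⊗ B`, `Δ X = X⊗1 + 1⊗X`, `Δ X' = X'⊗P + P⊗X'`, `Δ P = P⊗P`. -/
noncomputable def Cop : B →ₐ[ℂ] B ⊗[ℂ] B :=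
  FreeAlgebra.lift ℂ (fun g : Gen => match g with
    | .X => FreeAlgebra.ι ℂ Gen.X ⊗ₜ[ℂ] 1 + 1 ⊗ₜ[ℂ] FreeAlgebra.ι ℂ Gen.X
    | .X' => FreeAlgebra.ι ℂ Gen.X' ⊗ₜ[ℂ] Pgen + Pgen ⊗ₜ[ℂ] FreeAlgebra.ι ℂ Gen.X'
    | .P => Pgen ⊗ₜ[ℂ] Pgen)

/-- The functional `φ ⊗ ψ` on `B ⊗ B`. -/
noncomputable def tensorFunc (φ ψ : B →ₗ[ℂ] ℂ) : B ⊗[ℂ] B →ₗ[ℂ] ℂ :=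
  (LinearMap.mul' ℂ ℂ).comp (TensorProduct.map φ ψ)

/-- The filtered convolution `φ ⋆ ψ = (φ ⊗ ψ) ∘ Δ`. -/
noncomputable def filtConv (φ ψ : B →ₗ[ℂ] ℂ) : B →ₗ[ℂ] ℂ :=
  (tensorFunc φ ψ).comp Cop.toLinearMap

/-- The `n`-th moment of a measure on `ℝ`, as a complex number. -/
noncomputable def mom (μ : MeasureTheory.Measure ℝ) (n : ℕ) : ℂ :=
  ((∫ x, x ^ n ∂μ : ℝ) : ℂ)



/-- The letter of `s` at position `j` (defaulting to `z`). -/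
def letterAt (s : Word) (j : ℕ) : Letter := s.getD j Letter.z

/-- `P` is a partition of the finite set of positions `g ⊆ ℕ` into nonempty blocks. -/
def IsPartitionOn (g : Finset ℕ) (P : Finset (Finset ℕ)) : Prop :=
  (∀ b ∈ P, b.Nonempty) ∧ (P : Set (Finset ℕ)).PairwiseDisjoint id ∧ P.sup id = g

/-- The position `j` is inner with respect to the block `b`:
`j ∉ b` and `min b < j < max b`. -/
def InnerPos (j : ℕ) (b : Finset ℕ) : Prop :=
  j ∉ b ∧ ∃ i ∈ b, ∃ k ∈ b, i < j ∧ j < k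

/-- A partition is admissible if no block contains a letter `w` that is inner
with respect to another block. -/
def Admissible (s : Word) (P : Finset (Finset ℕ)) : Prop :=
  ∀ b ∈ P, ∀ b' ∈ P, b ≠ b' → ∀ j ∈ b, letterAt s j = Letter.w → ¬ InnerPos j b'

open scoped Classical in
/-- The set `AP(s)` of admissible partitions of the positions `g` of the word `s`. -/
noncomputable def APfin (s : Word) (g : Finset ℕ) : Finset (Finset (Finset ℕ)) :=
  g.powerset.powerset.filter fun P => IsPartitionOn g P ∧ Admissible s P

/-- The subword of `s` determined by a set of positions `b`. -/
def wordOf (s : Word) (b : Finset ℕ) : Word :=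
  (b.sort (· ≤ ·)).map (letterAt s)

/-- `L` is the family of admissible cumulants of the moment function `M`:
`M(s) = Σ_{u ∈ AP(s)} L(u₁)⋯L(u_p)` for every nonempty word `s`. -/
def IsCumulants (M L : Word → ℂ) : Prop :=
  ∀ s : Word, s ≠ [] →
    M s = ∑ P ∈ APfin s (Finset.range s.length), ∏ b ∈ P, L (wordOf s b)

/-- `P` refines `Q`: every block of `P` is contained in a block of `Q`. -/
def Refines (P Q : Finset (Finset ℕ)) : Prop := ∀ b ∈ P, ∃ c ∈ Q, b ⊆ c

open scoped Classical in
/-- `m` is the Möbius function of the lattice `AP(s)` of admissible partitions of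
the position set `g` of `s`: `m(u|u) = 1` and `m(u|v) = −Σ_{u ≤ t < v} m(u|t)`. -/
noncomputable def IsMobius (s : Word) (g : Finset ℕ)
    (m : Finset (Finset ℕ) → Finset (Finset ℕ) → ℂ) : Prop :=
  (∀ u ∈ APfin s g, m u u = 1) ∧
    ∀ u ∈ APfin s g, ∀ v ∈ APfin s g, Refines u v → u ≠ v →
      m u v = -∑ t ∈ (APfin s g).filter fun t => Refines u t ∧ Refines t v ∧ t ≠ v, m u t

/-- `j₁(X(z)) = X⊗1`, `j₁(X(w)) = X'⊗P`, `j₂(X(z)) = 1⊗X`, `j₂(X(w)) = P⊗X'`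
(`true` stands for the leg `1`, `false` for the leg `2`). -/
noncomputable def jmap : Bool → Letter → B ⊗[ℂ] B
  | true, .z => FreeAlgebra.ι ℂ Gen.X ⊗ₜ[ℂ] 1
  | true, .w => FreeAlgebra.ι ℂ Gen.X' ⊗ₜ[ℂ] Pgen
  | false, .z => (1 : B) ⊗ₜ[ℂ] FreeAlgebra.ι ℂ Gen.X
  | false, .w => Pgen ⊗ₜ[ℂ] FreeAlgebra.ι ℂ Gen.X'

/-- The element `j_{ε₁}(X(s₁)) ⋯ j_{ε_n}(X(s_n))` of `B ⊗ B`. -/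
noncomputable def tensElem (s : Word) (ε : ℕ → Bool) : B ⊗[ℂ] B :=
  ((List.range s.length).map fun i => jmap (ε i) (letterAt s i)).prod

/-- The set of positions of `s` carrying the leg `v` (the subword `s(1,ε)` resp. `s(2,ε)`). -/
def legSet (s : Word) (ε : ℕ → Bool) (v : Bool) : Finset ℕ :=
  (Finset.range s.length).filter fun i => ε i = v

/-- The pair `(u₁, u₂)` is the coarsest pair of partitions of `s(1,ε)` and `s(2,ε)`
whose union is an admissible partition of `s`. -/
def IsCoarsestPair (s : Word) (ε : ℕ → Bool) (u₁ u₂ : Finset (Finset ℕ)) : Prop :=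
  (IsPartitionOn (legSet s ε true) u₁ ∧ IsPartitionOn (legSet s ε false) u₂ ∧
      Admissible s (u₁ ∪ u₂)) ∧
    ∀ v₁ v₂ : Finset (Finset ℕ),
      IsPartitionOn (legSet s ε true) v₁ → IsPartitionOn (legSet s ε false) v₂ →
        Admissible s (v₁ ∪ v₂) → Refines v₁ u₁ ∧ Refines v₂ u₂

/-!
Under `j₁, j₂` the leg `v` of `tensElem s ε` is a word in `X, X', P`: it keeps the letters at
positions with `ε = v` and turns every `w` of the other leg into `P`, while the `z`s of the other
leg become `1`. So `hatL m` evaluates it to the product of `m (length)` over its maximal `P`-free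
pieces, i.e. over the runs of `v`-positions not separated by a `w` of the other leg. These runs are
the fibres of `cutCount`, the number of such `w`s to the left. Together they form an admissible
partition, and every admissible pair refines them, because a separating `w` would be inner to a
block meeting both sides of it; so they are the unique coarsest pair.
-/

-- `wordVal` splits with the derived `BEq Gen`, which the `List.splitOn` lemmas need lawful.
instance : LawfulBEq Gen where
  eq_of_beq {a b} h := by cases a <;> cases b <;> first | rfl | exact absurd h (by decide)
  rfl {a} := by cases a <;> rfl

namespace List

variable {α : Type*}

theorem intercalate_concat (sep : List α) {ls : List (List α)} (hls : ls ≠ []) (l : List α) :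
    sep.intercalate (ls ++ [l]) = sep.intercalate ls ++ sep ++ l := by
  induction ls with
  | nil => exact absurd rfl hls
  | cons a t ih =>
    rcases t with _ | ⟨b, t⟩
    · simp
    · rw [cons_append, intercalate_cons_of_ne_nil (by simp), ih (cons_ne_nil b t),
        intercalate_cons_of_ne_nil (cons_ne_nil b t)]
      simp

theorem intercalate_modifyLast_concat (sep : List α) {ls : List (List α)} (hls : ls ≠ [])
    (a : α) : sep.intercalate (ls.modifyLast (· ++ [a])) = sep.intercalate ls ++ [a] := by
  obtain ⟨L, l, rfl⟩ := ls.eq_nil_or_concat.resolve_left hls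
  rw [concat_eq_append, modifyLast_concat]
  rcases eq_or_ne L [] with rfl | hL
  · simp
  · simp [intercalate_concat sep hL]

theorem prod_map_filterMap {β M : Type*} [Monoid M] (l : List α) (o : α → Option β)
    (f : β → M) : ((l.filterMap o).map f).prod = (l.map fun a => ((o a).map f).getD 1).prod := by
  induction l with
  | nil => rfl
  | cons a l ih => cases h : o a <;> simp [h, ih]

end List

theorem Algebra.TensorProduct.list_prod_map_tmul {R A C ι : Type*} [CommSemiring R] [Semiring A]
    [Algebra R A] [Semiring C] [Algebra R C] (l : List ι) (a : ι → A) (c : ι → C) :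
    (l.map fun i => a i ⊗ₜ[R] c i).prod = (l.map a).prod ⊗ₜ[R] (l.map c).prod := by
  induction l with
  | nil => exact Algebra.TensorProduct.one_def
  | cons i l ih => simp only [List.map_cons, List.prod_cons, ih, tmul_mul_tmul]

section Separators

variable {α : Type*} [BEq α] (sep : α) (o : ℕ → Option α)

def sepCount (n : ℕ) : ℕ := ((Finset.range n).filter fun i => o i == some sep).card

def sepSegment (n k : ℕ) : List α :=
  (List.range n).filterMap fun i => if sepCount sep o i = k then (o i).filter (· != sep) else none

def sepSegments (n : ℕ) : List (List α) :=
  (List.range (sepCount sep o n + 1)).map (sepSegment sep o n)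

theorem sepCount_mono : Monotone (sepCount sep o) := fun _ _ h =>
  Finset.card_le_card (Finset.filter_subset_filter _ (Finset.range_subset_range.2 h))

variable {sep o}

theorem sepSegment_succ (n k : ℕ) : sepSegment sep o (n + 1) k = sepSegment sep o n k ++
    if sepCount sep o n = k then ((o n).filter (· != sep)).toList else [] := by
  simp only [sepSegment, List.range_succ, List.filterMap_append, List.filterMap_cons,
    List.filterMap_nil]
  split_ifs <;> cases (o n).filter (· != sep) <;> simp

theorem sepSegment_eq_nil_of_lt {n k : ℕ} (h : sepCount sep o n < k) :
    sepSegment sep o n k = [] := by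
  refine List.filterMap_eq_nil_iff.2 fun i hi => if_neg ?_
  have := sepCount_mono sep o (List.mem_range.1 hi).le
  omega

theorem sepSegments_ne_nil (n : ℕ) : sepSegments sep o n ≠ [] := by simp [sepSegments]

theorem length_sepSegment (n k : ℕ) : (sepSegment sep o n k).length =
    ((Finset.range n).filter fun i =>
      sepCount sep o i = k ∧ ((o i).filter (· != sep)).isSome).card := by
  rw [sepSegment, List.length_filterMap_eq_countP]
  simp only [Finset.card, Finset.filter_val, Finset.range_val, Multiset.range, Multiset.filter_coe,
    Multiset.coe_card, List.countP_eq_length_filter]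
  congr 2
  funext i
  split_ifs <;> simp [*]

variable [LawfulBEq α]

theorem sepCount_succ_of_ne {n : ℕ} (h : o n ≠ some sep) :
    sepCount sep o (n + 1) = sepCount sep o n := by
  simp [sepCount, Finset.range_add_one, Finset.filter_insert, h]

theorem sepCount_succ_of_eq {n : ℕ} (h : o n = some sep) :
    sepCount sep o (n + 1) = sepCount sep o n + 1 := by
  simp [sepCount, Finset.range_add_one, Finset.filter_insert, h]

theorem sepSegments_succ_of_eq_none {n : ℕ} (h : o n = none) :
    sepSegments sep o (n + 1) = sepSegments sep o n := by
  simp [sepSegments, sepSegment_succ, h, sepCount_succ_of_ne (show o n ≠ some sep by simp [h])]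

theorem sepSegments_succ_of_eq_sep {n : ℕ} (h : o n = some sep) :
    sepSegments sep o (n + 1) = sepSegments sep o n ++ [[]] := by
  simp only [sepSegments, sepCount_succ_of_eq h, List.range_succ (n := sepCount sep o n + 1),
    List.map_append, List.map_singleton]
  have hf : (o n).filter (· != sep) = none := by simp [h]
  simp [sepSegment_succ, hf, sepSegment_eq_nil_of_lt (Nat.lt_succ_self _)]

theorem sepSegments_succ_of_ne_sep {n : ℕ} {a : α} (h : o n = some a) (ha : a ≠ sep) :
    sepSegments sep o (n + 1) = (sepSegments sep o n).modifyLast (· ++ [a]) := by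
  have hfa : (o n).filter (· != sep) = some a := by simp [h, ha]
  simp only [sepSegments, sepCount_succ_of_ne (h.trans_ne (by simpa using ha)), List.range_succ,
    List.map_append, List.map_singleton, List.modifyLast_concat, sepSegment_succ, hfa]
  congr 1
  refine List.map_congr_left fun k hk => ?_
  rw [sepSegment_succ, if_neg (List.mem_range.1 hk).ne', List.append_nil]

theorem filterMap_range_eq_intercalate (n : ℕ) :
    (List.range n).filterMap o = [sep].intercalate (sepSegments sep o n) := by
  induction n with
  | zero => simp [sepSegments, sepSegment, sepCount]
  | succ n ih =>
    rw [List.range_succ, List.filterMap_append, ih]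
    rcases h : o n with _ | a
    · simp [sepSegments_succ_of_eq_none h, h]
    · by_cases ha : a = sep
      · subst ha
        simp [sepSegments_succ_of_eq_sep h, List.intercalate_concat _ (sepSegments_ne_nil n), h]
      · simp [sepSegments_succ_of_ne_sep h ha,
          List.intercalate_modifyLast_concat _ (sepSegments_ne_nil n), h]

theorem splitOn_filterMap_range (n : ℕ) :
    ((List.range n).filterMap o).splitOn sep = sepSegments sep o n := by
  rw [filterMap_range_eq_intercalate]
  refine List.splitOn_intercalate sep (fun l hl hsep => ?_) (sepSegments_ne_nil n)
  obtain ⟨k, -, rfl⟩ := List.mem_map.1 hl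
  obtain ⟨i, -, hi⟩ := List.mem_filterMap.1 hsep
  split_ifs at hi
  simp_all

end Separators

theorem wordVal_filterMap_range (m : ℕ → ℂ) (o : ℕ → Option Gen) (n : ℕ) :
    wordVal m ((List.range n).filterMap o) = ∏ k ∈ Finset.range (sepCount Gen.P o n + 1),
      if sepSegment Gen.P o n k = [] then 1 else m (sepSegment Gen.P o n k).length := by
  rw [wordVal, splitOn_filterMap_range, sepSegments, List.map_map]
  rfl

namespace IsPartitionOn

variable {g : Finset ℕ} {P Q : Finset (Finset ℕ)}

theorem subset (hP : IsPartitionOn g P) {b : Finset ℕ} (hb : b ∈ P) : b ⊆ g :=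
  hP.2.2 ▸ Finset.le_sup (f := id) hb

theorem exists_mem (hP : IsPartitionOn g P) {i : ℕ} (hi : i ∈ g) : ∃ b ∈ P, i ∈ b := by
  rw [← hP.2.2] at hi
  simpa using Finset.mem_sup.1 hi

theorem subset_of_refines (hP : IsPartitionOn g P) (hPQ : Refines P Q) (hQP : Refines Q P) :
    P ⊆ Q := by
  intro b hb
  obtain ⟨c, hc, hbc⟩ := hPQ b hb
  obtain ⟨b', hb', hcb'⟩ := hQP c hc
  obtain ⟨i, hi⟩ := hP.1 b hb
  have hbb' : b = b' := by
    by_contra hne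
    exact Finset.disjoint_left.1 (hP.2.1 hb hb' hne) hi (hcb' (hbc hi))
  subst hbb'
  exact (Finset.Subset.antisymm hbc hcb') ▸ hc

theorem eq_of_refines (hP : IsPartitionOn g P) (hQ : IsPartitionOn g Q) (hPQ : Refines P Q)
    (hQP : Refines Q P) : P = Q :=
  Finset.Subset.antisymm (hP.subset_of_refines hPQ hQP) (hQ.subset_of_refines hQP hPQ)

end IsPartitionOn

section Fibers

variable {β : Type*} [DecidableEq β]

def fibersOf (g : Finset ℕ) (f : ℕ → β) : Finset (Finset ℕ) :=
  g.image fun i => g.filter fun k => f k = f i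

variable {g : Finset ℕ} {f : ℕ → β} {b : Finset ℕ}

theorem apply_eq_of_mem_fibersOf (hb : b ∈ fibersOf g f) {i k : ℕ} (hi : i ∈ b) (hk : k ∈ b) :
    f i = f k := by
  obtain ⟨j, -, rfl⟩ := Finset.mem_image.1 hb
  exact (Finset.mem_filter.1 hi).2.trans (Finset.mem_filter.1 hk).2.symm

theorem mem_of_mem_fibersOf (hb : b ∈ fibersOf g f) {i k : ℕ} (hi : i ∈ b) (hk : k ∈ g)
    (hik : f k = f i) : k ∈ b := by
  obtain ⟨j, -, rfl⟩ := Finset.mem_image.1 hb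
  exact Finset.mem_filter.2 ⟨hk, hik.trans (Finset.mem_filter.1 hi).2⟩

theorem isPartitionOn_fibersOf (g : Finset ℕ) (f : ℕ → β) : IsPartitionOn g (fibersOf g f) := by
  refine ⟨?_, ?_, ?_⟩
  · intro b hb
    obtain ⟨i, hi, rfl⟩ := Finset.mem_image.1 hb
    exact ⟨i, Finset.mem_filter.2 ⟨hi, rfl⟩⟩
  · intro b hb b' hb' hne
    refine Finset.disjoint_left.2 fun k hk hk' => hne ?_
    obtain ⟨i, -, rfl⟩ := Finset.mem_image.1 hb
    obtain ⟨i', -, rfl⟩ := Finset.mem_image.1 hb'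
    simp only [← (Finset.mem_filter.1 hk).2, (Finset.mem_filter.1 hk').2]
  · refine le_antisymm (Finset.sup_le fun b hb => ?_) fun i hi => ?_
    · obtain ⟨i, -, rfl⟩ := Finset.mem_image.1 hb
      exact Finset.filter_subset _ _
    · exact Finset.mem_sup.2 ⟨_, Finset.mem_image_of_mem _ hi, Finset.mem_filter.2 ⟨hi, rfl⟩⟩

theorem refines_fibersOf {P : Finset (Finset ℕ)} (hP : IsPartitionOn g P)
    (hf : ∀ b ∈ P, ∀ i ∈ b, ∀ k ∈ b, f i = f k) : Refines P (fibersOf g f) := by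
  intro b hb
  obtain ⟨i, hi⟩ := hP.1 b hb
  exact ⟨_, Finset.mem_image_of_mem _ (hP.subset hb hi),
    fun k hk => Finset.mem_filter.2 ⟨hP.subset hb hk, hf b hb k hk i hi⟩⟩

theorem prod_fibersOf {M : Type*} [CommMonoid M] (φ : Finset ℕ → M) {t : Finset β}
    (ht : ∀ i ∈ g, f i ∈ t) : ∏ b ∈ fibersOf g f, φ b =
      ∏ k ∈ t, if g.filter (f · = k) = ∅ then 1 else φ (g.filter (f · = k)) := by
  have himage : fibersOf g f = (g.image f).image fun k => g.filter (f · = k) := by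
    rw [fibersOf, Finset.image_image]
    rfl
  have hinj : Set.InjOn (fun k => g.filter (f · = k)) (g.image f) := by
    intro k hk k' _ hkk'
    obtain ⟨i, hi, rfl⟩ := Finset.mem_image.1 hk
    have hmem : i ∈ g.filter (f · = f i) := Finset.mem_filter.2 ⟨hi, rfl⟩
    rw [show g.filter (f · = f i) = g.filter (f · = k') from hkk'] at hmem
    exact (Finset.mem_filter.1 hmem).2
  rw [himage, Finset.prod_image hinj]
  refine Finset.prod_subset_one_on_sdiff ?_ (fun k hk => if_pos ?_) (fun k hk => (if_neg ?_).symm)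
  · exact Finset.image_subset_iff.2 ht
  · simpa [Finset.filter_eq_empty_iff] using (Finset.mem_sdiff.1 hk).2
  · obtain ⟨i, hi, rfl⟩ := Finset.mem_image.1 hk
    exact Finset.ne_empty_of_mem (Finset.mem_filter.2 ⟨hi, rfl⟩)

end Fibers

def Letter.gen : Letter → Gen
  | .z => .X
  | .w => .X'

noncomputable def genWord (l : List Gen) : B := (l.map (FreeAlgebra.ι ℂ)).prod

theorem equivMonoidAlgebraFreeMonoid_genWord (l : List Gen) :
    FreeAlgebra.equivMonoidAlgebraFreeMonoid (genWord l) =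
      MonoidAlgebra.single (FreeMonoid.ofList l) (1 : ℂ) := by
  induction l with
  | nil => exact map_one _
  | cons a l ih =>
    have hι : FreeAlgebra.equivMonoidAlgebraFreeMonoid (FreeAlgebra.ι ℂ a) =
        MonoidAlgebra.single (FreeMonoid.of a) (1 : ℂ) := by
      simp [FreeAlgebra.equivMonoidAlgebraFreeMonoid]
    rw [genWord, List.map_cons, List.prod_cons, map_mul, ← genWord, ih, hι,
      MonoidAlgebra.single_mul_single, one_mul]
    rfl

theorem hatL_genWord (m : ℕ → ℂ) (l : List Gen) : hatL m (genWord l) = wordVal m l := by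
  simp only [hatL, LinearMap.coe_comp, Function.comp_apply, AlgEquiv.toLinearMap_apply,
    equivMonoidAlgebraFreeMonoid_genWord]
  change Finsupp.linearCombination ℂ _ (Finsupp.single (FreeMonoid.ofList l) 1) = _
  rw [Finsupp.linearCombination_single, one_smul, FreeMonoid.toList_ofList]

theorem tensorFunc_tmul (φ ψ : B →ₗ[ℂ] ℂ) (a b : B) :
    tensorFunc φ ψ (a ⊗ₜ[ℂ] b) = φ a * ψ b := by
  simp [tensorFunc]

theorem hatL_Xword (m : ℕ → ℂ) {t : Word} (ht : t ≠ []) : hatL m (Xword t) = m t.length := by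
  have hX : Xword t = genWord (t.map Letter.gen) := by
    rw [Xword, genWord, List.map_map]
    rfl
  have hP : Gen.P ∉ t.map Letter.gen := by
    simp only [List.mem_map, not_exists, not_and]
    intro l _
    cases l <;> simp [Letter.gen]
  rw [hX, hatL_genWord, wordVal, List.splitOn_eq_singleton hP]
  simp [ht]

section Legs

variable (s : Word) (ε : ℕ → Bool)

-- The factor of `jmap (ε i) (letterAt s i)` in the tensor leg `v`; `none` stands for `1`.
def legGen (v : Bool) (i : ℕ) : Option Gen :=
  if ε i = v then some (letterAt s i).gen else if letterAt s i = .w then some .P else none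

def legWord (v : Bool) : List Gen := (List.range s.length).filterMap (legGen s ε v)

def cutCount (v : Bool) (i : ℕ) : ℕ :=
  ((Finset.range i).filter fun j => ε j = !v ∧ letterAt s j = .w).card

def legBlocks (v : Bool) : Finset (Finset ℕ) := fibersOf (legSet s ε v) (cutCount s ε v)

variable {s ε}

theorem mem_legSet {v : Bool} {i : ℕ} : i ∈ legSet s ε v ↔ i < s.length ∧ ε i = v := by
  simp [legSet]

theorem sepCount_legGen (v : Bool) : sepCount Gen.P (legGen s ε v) = cutCount s ε v := by
  funext i
  refine congrArg Finset.card (Finset.filter_congr fun j _ => ?_)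
  cases v <;> cases he : ε j <;> cases hl : letterAt s j <;> simp [legGen, Letter.gen, he, hl]

theorem isSome_filter_legGen (v : Bool) (i : ℕ) :
    ((legGen s ε v i).filter (· != Gen.P)).isSome ↔ ε i = v := by
  by_cases h : ε i = v
  · cases hl : letterAt s i <;> simp [legGen, Letter.gen, h, hl]
  · by_cases hl : letterAt s i = .w <;> simp [legGen, h, hl]

theorem cutCount_mono (v : Bool) : Monotone (cutCount s ε v) :=
  sepCount_legGen (s := s) (ε := ε) v ▸ sepCount_mono _ _

theorem cutCount_lt_of_cut {v : Bool} {i j k : ℕ} (hij : i ≤ j) (hjk : j < k) (hj : ε j = !v)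
    (hw : letterAt s j = .w) : cutCount s ε v i < cutCount s ε v k := by
  refine Finset.card_lt_card ⟨Finset.filter_subset_filter _
    (Finset.range_subset_range.2 (hij.trans hjk.le)), fun hsub => ?_⟩
  have := hsub (Finset.mem_filter.2 ⟨Finset.mem_range.2 hjk, hj, hw⟩)
  simp only [Finset.mem_filter, Finset.mem_range] at this
  omega

theorem exists_cut_of_cutCount_ne {v : Bool} {i k : ℕ} (hik : i ≤ k)
    (hne : cutCount s ε v i ≠ cutCount s ε v k) :
    ∃ j, i ≤ j ∧ j < k ∧ ε j = !v ∧ letterAt s j = .w := by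
  have hsub : (Finset.range i).filter (fun j => ε j = !v ∧ letterAt s j = .w) ⊆
      (Finset.range k).filter fun j => ε j = !v ∧ letterAt s j = .w :=
    Finset.filter_subset_filter _ (Finset.range_subset_range.2 hik)
  obtain ⟨j, hjk, hji⟩ := Finset.exists_of_ssubset
    ⟨hsub, fun h => hne (le_antisymm (Finset.card_le_card hsub) (Finset.card_le_card h))⟩
  simp only [Finset.mem_filter, Finset.mem_range] at hjk hji
  exact ⟨j, by_contra fun h => hji ⟨by omega, hjk.2⟩, hjk⟩

theorem admissible_legBlocks : Admissible s (legBlocks s ε true ∪ legBlocks s ε false) := by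
  rintro - - b' hb' - j - hw ⟨hjb', i, hi, k, hk, hij, hjk⟩
  obtain ⟨v, hv⟩ : ∃ v, b' ∈ legBlocks s ε v := by
    rcases Finset.mem_union.1 hb' with h | h
    exacts [⟨true, h⟩, ⟨false, h⟩]
  have hik := apply_eq_of_mem_fibersOf hv hi hk
  by_cases hjv : ε j = v
  · have hkn := (mem_legSet.1 ((isPartitionOn_fibersOf _ _).subset hv hk)).1
    refine hjb' (mem_of_mem_fibersOf hv hi (mem_legSet.2 ⟨hjk.trans hkn, hjv⟩) ?_)
    exact le_antisymm (hik ▸ cutCount_mono v hjk.le) (cutCount_mono v hij.le)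
  · exact (cutCount_lt_of_cut hij.le hjk (Bool.eq_not_of_ne hjv) hw).ne hik

theorem cutCount_eq_of_admissible {v : Bool} {Pv Po : Finset (Finset ℕ)}
    (hPv : IsPartitionOn (legSet s ε v) Pv) (hPo : IsPartitionOn (legSet s ε (!v)) Po)
    (hadm : Admissible s (Pv ∪ Po)) {b : Finset ℕ} (hb : b ∈ Pv) {i k : ℕ} (hi : i ∈ b)
    (hk : k ∈ b) (hik : i ≤ k) : cutCount s ε v i = cutCount s ε v k := by
  by_contra hne
  obtain ⟨j, hij, hjk, hj, hw⟩ := exists_cut_of_cutCount_ne hik hne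
  have hjb : j ∉ b := fun h => by
    have := (mem_legSet.1 (hPv.subset hb h)).2
    simp_all
  obtain ⟨c, hc, hjc⟩ :=
    hPo.exists_mem (mem_legSet.2 ⟨hjk.trans (mem_legSet.1 (hPv.subset hb hk)).1, hj⟩)
  have hij' : i < j := lt_of_le_of_ne hij fun h => hjb (h ▸ hi)
  exact hadm c (Finset.mem_union_right _ hc) b (Finset.mem_union_left _ hb)
    (fun h => hjb (h ▸ hjc)) j hjc hw ⟨hjb, i, hi, k, hk, hij', hjk⟩

theorem refines_legBlocks {v : Bool} {Pv Po : Finset (Finset ℕ)}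
    (hPv : IsPartitionOn (legSet s ε v) Pv) (hPo : IsPartitionOn (legSet s ε (!v)) Po)
    (hadm : Admissible s (Pv ∪ Po)) : Refines Pv (legBlocks s ε v) :=
  refines_fibersOf hPv fun _ hb i hi k hk => (le_total i k).elim
    (cutCount_eq_of_admissible hPv hPo hadm hb hi hk)
    fun h => (cutCount_eq_of_admissible hPv hPo hadm hb hk hi h).symm

variable (s ε) in
theorem isCoarsestPair_legBlocks :
    IsCoarsestPair s ε (legBlocks s ε true) (legBlocks s ε false) :=
  ⟨⟨isPartitionOn_fibersOf _ _, isPartitionOn_fibersOf _ _, admissible_legBlocks⟩,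
    fun v₁ v₂ h₁ h₂ hadm => ⟨refines_legBlocks h₁ h₂ hadm,
      refines_legBlocks h₂ h₁ (Finset.union_comm v₁ v₂ ▸ hadm)⟩⟩

theorem IsCoarsestPair.eq_legBlocks {u₁ u₂ : Finset (Finset ℕ)} (h : IsCoarsestPair s ε u₁ u₂) :
    u₁ = legBlocks s ε true ∧ u₂ = legBlocks s ε false := by
  obtain ⟨⟨h₁, h₂, hadm⟩, hcoarse⟩ := h
  obtain ⟨⟨c₁, c₂, cadm⟩, ccoarse⟩ := isCoarsestPair_legBlocks s ε
  obtain ⟨r₁, r₂⟩ := ccoarse u₁ u₂ h₁ h₂ hadm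
  obtain ⟨r₁', r₂'⟩ := hcoarse _ _ c₁ c₂ cadm
  exact ⟨h₁.eq_of_refines c₁ r₁ r₁', h₂.eq_of_refines c₂ r₂ r₂'⟩

theorem wordVal_legWord (m : ℕ → ℂ) (v : Bool) :
    wordVal m (legWord s ε v) = ∏ b ∈ legBlocks s ε v, m b.card := by
  rw [legWord, wordVal_filterMap_range, legBlocks, prod_fibersOf (fun b => m b.card)
    (t := Finset.range (sepCount Gen.P (legGen s ε v) s.length + 1))]
  · refine Finset.prod_congr rfl fun k _ => ?_
    have hfiber : ((Finset.range s.length).filter fun i => sepCount Gen.P (legGen s ε v) i = k ∧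
        ((legGen s ε v i).filter (· != Gen.P)).isSome) =
        (legSet s ε v).filter (cutCount s ε v · = k) := by
      ext i
      simp only [legSet, Finset.mem_filter, Finset.mem_range, sepCount_legGen, isSome_filter_legGen]
      tauto
    simp only [← List.length_eq_zero_iff, length_sepSegment, hfiber, Finset.card_eq_zero]
  · intro i hi
    rw [sepCount_legGen, Finset.mem_range]
    exact Nat.lt_succ_of_le (cutCount_mono v (mem_legSet.1 hi).1.le)

theorem jmap_eq_tmul (i : ℕ) : jmap (ε i) (letterAt s i) =
    ((legGen s ε true i).map (FreeAlgebra.ι ℂ)).getD 1 ⊗ₜ[ℂ]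
      ((legGen s ε false i).map (FreeAlgebra.ι ℂ)).getD 1 := by
  cases hε : ε i <;> cases hl : letterAt s i <;> simp [jmap, legGen, Letter.gen, Pgen, hε, hl]

theorem tensElem_eq_tmul :
    tensElem s ε = genWord (legWord s ε true) ⊗ₜ[ℂ] genWord (legWord s ε false) := by
  simp only [tensElem, jmap_eq_tmul, Algebra.TensorProduct.list_prod_map_tmul, genWord, legWord,
    List.prod_map_filterMap]

theorem prod_hatL_Xword_legBlocks (m : ℕ → ℂ) (v : Bool) :
    ∏ b ∈ legBlocks s ε v, hatL m (Xword (wordOf s b)) = ∏ b ∈ legBlocks s ε v, m b.card := by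
  refine Finset.prod_congr rfl fun b hb => ?_
  have hlen : (wordOf s b).length = b.card := by simp [wordOf]
  obtain ⟨i, hi⟩ := (isPartitionOn_fibersOf _ _).1 b hb
  rw [hatL_Xword m (List.ne_nil_of_length_pos (hlen ▸ Finset.card_pos.2 ⟨i, hi⟩)), hlen]

theorem tensorFunc_hatL_tensElem (m₁ m₂ : ℕ → ℂ) :
    tensorFunc (hatL m₁) (hatL m₂) (tensElem s ε) =
      (∏ b ∈ legBlocks s ε true, m₁ b.card) * ∏ b ∈ legBlocks s ε false, m₂ b.card := by
  rw [tensElem_eq_tmul, tensorFunc_tmul, hatL_genWord, hatL_genWord, wordVal_legWord,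
    wordVal_legWord]

end Legs

theorem tensor_moment_factorization_general (μ ν : MeasureTheory.Measure ℝ)
    (s : Word) (ε : ℕ → Bool) :
    (∃! p : Finset (Finset ℕ) × Finset (Finset ℕ), IsCoarsestPair s ε p.1 p.2) ∧
      ∀ u₁ u₂ : Finset (Finset ℕ), IsCoarsestPair s ε u₁ u₂ →
        tensorFunc (hatL (mom μ)) (hatL (mom ν)) (tensElem s ε) =
          (∏ b ∈ u₁, hatL (mom μ) (Xword (wordOf s b))) *
            ∏ b ∈ u₂, hatL (mom ν) (Xword (wordOf s b)) := by
  refine ⟨⟨(legBlocks s ε true, legBlocks s ε false), isCoarsestPair_legBlocks s ε,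
    fun p hp => ?_⟩, fun u₁ u₂ h => ?_⟩
  · exact Prod.ext hp.eq_legBlocks.1 hp.eq_legBlocks.2
  · obtain ⟨rfl, rfl⟩ := h.eq_legBlocks
    rw [tensorFunc_hatL_tensElem, prod_hatL_Xword_legBlocks, prod_hatL_Xword_legBlocks]

/-- the mixed moment `(μ̂⊗ν̂)(s,ε)` factorizes along the unique coarsest
pair of partitions of `s(1,ε)`, `s(2,ε)` defining an admissible partition of `s`. -/
theorem tensor_moment_factorization (μ ν : MeasureTheory.Measure ℝ)
    [MeasureTheory.IsProbabilityMeasure μ] [MeasureTheory.IsProbabilityMeasure ν]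
    (hμ : ∀ n : ℕ, MeasureTheory.Integrable (fun x => x ^ n) μ)
    (hν : ∀ n : ℕ, MeasureTheory.Integrable (fun x => x ^ n) ν)
    (s : Word) (hs : s ≠ []) (ε : ℕ → Bool) :
    (∃! p : Finset (Finset ℕ) × Finset (Finset ℕ), IsCoarsestPair s ε p.1 p.2) ∧
      ∀ u₁ u₂ : Finset (Finset ℕ), IsCoarsestPair s ε u₁ u₂ →
        tensorFunc (hatL (mom μ)) (hatL (mom ν)) (tensElem s ε) =
          (∏ b ∈ u₁, hatL (mom μ) (Xword (wordOf s b))) *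
            ∏ b ∈ u₂, hatL (mom ν) (Xword (wordOf s b)) :=
  tensor_moment_factorization_general μ ν s ε
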